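/- arXiv:1904.10687 — 3 statements merged into one kernel-verified Lean document; each statement's English description precedes it below -/
import Mathlib

section
/- Let 0 ≤ β ≤ α ≤ 1, let (j,m,ℓ) ∈ I₀, and let ξ ∈ Q_{j,m,ℓ}. Then 2^{j−2} < 2^{j−1} + 2^{αj}·(m − ε) ≤ |ξ| ≤ 2^{j−1} + 2^{αj}·(m + 2 + 2ε) ≤ 2^j + 2^{αj}·(3 + 2ε) < 2^{j+3}, and moreover there exists φ ∈ ℝ such that ξ = |ξ|·(cos φ, sin φ) and |φ − Θ_{j,ℓ}| ≤ 4·(1 + ε)·2^{(β−1)j}. -/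
/-!
A point of `Q_{j,m,ℓ}` is `ξ = R_Θ (u₀, u₁)` with `u₀ = 2^{j-1} + 2^{αj}(m + s)`, `u₁ = 2^{βj} t`
and `(s, t) ∈ Q`. Rotations preserve the norm, so `u₀ ≤ |ξ| ≤ |u₀| + |u₁|`, and since `u₀ > 0`
the polar angle of `ξ` is `Θ + arctan (u₁ / u₀)`, which differs from `Θ` by at most
`|u₁| / u₀` because `|arctan x| ≤ |x|`. The remaining inequalities only use
`2^{βj} ≤ 2^{αj} ≤ 2^j` and `m · 2^{αj} ≤ 2^{j-1} + 2^{αj}`, which is what `m ≤ m_j^max` says.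
-/

noncomputable section

open Real Set MeasureTheory Pointwise
open scoped ENNReal

/-- `ℝ²` with the Euclidean norm. -/
abbrev R2 : Type := EuclideanSpace ℝ (Fin 2)

/-- The vector `(a, b) ∈ ℝ²`. -/
def vec2 (a b : ℝ) : R2 := (EuclideanSpace.equiv (Fin 2) ℝ).symm ![a, b]

/-- Action of a `2×2` matrix on `ℝ²`. -/
def mulV (M : Matrix (Fin 2) (Fin 2) ℝ) (x : R2) : R2 :=
  (EuclideanSpace.equiv (Fin 2) ℝ).symm (M.mulVec ((EuclideanSpace.equiv (Fin 2) ℝ) x))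

/-- Rotation matrix through the angle `θ`. -/
def Rmat (θ : ℝ) : Matrix (Fin 2) (Fin 2) ℝ :=
  !![Real.cos θ, -Real.sin θ; Real.sin θ, Real.cos θ]

/-- The diagonal matrix `A_j = diag(2^{αj}, 2^{βj})`. -/
def Amat (α β : ℝ) (j : ℕ) : Matrix (Fin 2) (Fin 2) ℝ :=
  !![(2:ℝ) ^ (α * (j:ℝ)), 0; 0, (2:ℝ) ^ (β * (j:ℝ))]

/-- The angle `Θ_{j,ℓ} = 2ℓ·(π/N)·2^{(β − 1)j}`, with `N = 10`. -/
def Theta (β : ℝ) (j ℓ : ℕ) : ℝ :=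
  2 * (ℓ:ℝ) * (Real.pi / 10) * (2:ℝ) ^ ((β - 1) * (j:ℝ))

/-- The translation `c_{j,m} = (2^{j−1} + m·2^{αj}, 0)ᵗ`. -/
def cvec (α : ℝ) (j m : ℕ) : R2 :=
  vec2 ((2:ℝ) ^ ((j:ℝ) - 1) + (m:ℝ) * (2:ℝ) ^ (α * (j:ℝ))) 0

/-- The base set `Q = (−ε, 1+ε) × (−1−ε, 1+ε)`. -/
def baseQ (ε : ℝ) : Set R2 :=
  {x : R2 | x 0 ∈ Set.Ioo (-ε) (1+ε) ∧ x 1 ∈ Set.Ioo (-1-ε) (1+ε)}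

/-- `m_j^max = ⌈2^{(1−α)j−1}⌉`. -/
def mjmax (α : ℝ) (j : ℕ) : ℤ := ⌈(2:ℝ) ^ ((1-α) * (j:ℝ) - 1)⌉

/-- `ℓ_j^max = ⌈N·2^{(1−β)j}⌉`, with `N = 10`. -/
def ljmax (β : ℝ) (j : ℕ) : ℤ := ⌈(10:ℝ) * (2:ℝ) ^ ((1-β) * (j:ℝ))⌉

/-- Membership of a triple `(j,m,ℓ)` in the index set
`I₀ = {(j,m,ℓ) ∈ ℕ × ℕ₀ × ℕ₀ : m ≤ m_j^max, ℓ ≤ ℓ_j^max}` (with `ℕ = {1,2,…}`). -/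
def memI0 (α β : ℝ) (i : ℕ × ℕ × ℕ) : Prop :=
  1 ≤ i.1 ∧ (i.2.1 : ℤ) ≤ mjmax α i.1 ∧ (i.2.2 : ℤ) ≤ ljmax β i.1

/-- The set `Q_{j,m,ℓ} = R_{j,ℓ}(A_j·Q + c_{j,m})`. -/
def Qset (α β ε : ℝ) (j m ℓ : ℕ) : Set R2 :=
  (fun x => mulV (Rmat (Theta β j ℓ)) (mulV (Amat α β j) x + cvec α j m)) '' baseQ ε


namespace Real

theorem arctan_le_self {x : ℝ} (hx : 0 ≤ x) : arctan x ≤ x := by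
  simpa only [tan_arctan] using le_tan (arctan_nonneg.2 hx) (arctan_lt_pi_div_two x)

theorem abs_arctan_le (x : ℝ) : |arctan x| ≤ |x| := by
  rcases le_total 0 x with hx | hx
  · rw [abs_of_nonneg (arctan_nonneg.2 hx), abs_of_nonneg hx]
    exact arctan_le_self hx
  · have h := arctan_le_self (neg_nonneg.2 hx)
    rw [arctan_neg] at h
    rw [abs_of_nonpos (arctan_le_zero.2 hx), abs_of_nonpos hx]
    linarith

end Real

@[simp] theorem vec2_apply_zero (a b : ℝ) : vec2 a b 0 = a := rfl

@[simp] theorem vec2_apply_one (a b : ℝ) : vec2 a b 1 = b := rfl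

theorem eq_vec2 (x : R2) : x = vec2 (x 0) (x 1) := by
  ext i
  fin_cases i <;> rfl

theorem vec2_add_vec2 (a b c d : ℝ) : vec2 a b + vec2 c d = vec2 (a + c) (b + d) := by
  ext i
  fin_cases i <;> rfl

theorem smul_vec2 (r a b : ℝ) : r • vec2 a b = vec2 (r * a) (r * b) := by
  ext i
  fin_cases i <;> rfl

theorem norm_vec2 (a b : ℝ) : ‖vec2 a b‖ = √(a ^ 2 + b ^ 2) := by
  simp [EuclideanSpace.norm_eq, Fin.sum_univ_two, sq_abs]

theorem le_norm_vec2 (a b : ℝ) : a ≤ ‖vec2 a b‖ := by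
  rw [norm_vec2]
  exact Real.le_sqrt_of_sq_le (le_add_of_nonneg_right (sq_nonneg b))

theorem norm_vec2_le (a b : ℝ) : ‖vec2 a b‖ ≤ |a| + |b| := by
  rw [norm_vec2, Real.sqrt_le_left (by positivity)]
  nlinarith [sq_abs a, sq_abs b, mul_nonneg (abs_nonneg a) (abs_nonneg b)]

theorem mulV_vec2 (M : Matrix (Fin 2) (Fin 2) ℝ) (a b : ℝ) :
    mulV M (vec2 a b) = vec2 (M 0 0 * a + M 0 1 * b) (M 1 0 * a + M 1 1 * b) := by
  ext i
  fin_cases i <;> simp [mulV, vec2]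

theorem mulV_Rmat_vec2 (θ a b : ℝ) :
    mulV (Rmat θ) (vec2 a b) = vec2 (cos θ * a - sin θ * b) (sin θ * a + cos θ * b) := by
  simp [mulV_vec2, Rmat, sub_eq_add_neg]

theorem norm_mulV_Rmat_vec2 (θ a b : ℝ) : ‖mulV (Rmat θ) (vec2 a b)‖ = ‖vec2 a b‖ := by
  rw [mulV_Rmat_vec2, norm_vec2, norm_vec2]
  congr 1
  linear_combination (a ^ 2 + b ^ 2) * sin_sq_add_cos_sq θ

theorem mulV_Rmat_polar (θ r φ : ℝ) :
    mulV (Rmat θ) (r • vec2 (cos φ) (sin φ)) = r • vec2 (cos (θ + φ)) (sin (θ + φ)) := by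
  rw [smul_vec2, mulV_Rmat_vec2, smul_vec2, cos_add, sin_add]
  congr 1 <;> ring

theorem vec2_eq_polar_arctan {a : ℝ} (ha : 0 < a) (b : ℝ) :
    vec2 a b = ‖vec2 a b‖ • vec2 (cos (arctan (b / a))) (sin (arctan (b / a))) := by
  have hr : ‖vec2 a b‖ = a * √(1 + (b / a) ^ 2) := by
    rw [norm_vec2, show a ^ 2 + b ^ 2 = a ^ 2 * (1 + (b / a) ^ 2) by field_simp,
      Real.sqrt_mul (sq_nonneg a), Real.sqrt_sq ha.le]
  have hs : 0 < √(1 + (b / a) ^ 2) := by positivity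
  rw [hr, cos_arctan, sin_arctan, smul_vec2]
  congr 1 <;> field_simp

theorem exists_angle_mulV_Rmat_vec2 (θ : ℝ) {a : ℝ} (ha : 0 < a) (b : ℝ) :
    ∃ φ, mulV (Rmat θ) (vec2 a b) = ‖mulV (Rmat θ) (vec2 a b)‖ • vec2 (cos φ) (sin φ) ∧
      |φ - θ| ≤ |b| / a := by
  refine ⟨θ + arctan (b / a), ?_, ?_⟩
  · rw [norm_mulV_Rmat_vec2, ← mulV_Rmat_polar, ← vec2_eq_polar_arctan ha]
  · simpa only [add_sub_cancel_left, abs_div, abs_of_pos ha] using Real.abs_arctan_le (b / a)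

section WavePacket

variable {α β ε : ℝ} {j m ℓ : ℕ}

theorem mulV_Amat_add_cvec (x : R2) :
    mulV (Amat α β j) x + cvec α j m =
      vec2 ((2:ℝ) ^ ((j:ℝ) - 1) + (2:ℝ) ^ (α * (j:ℝ)) * ((m:ℝ) + x 0))
        ((2:ℝ) ^ (β * (j:ℝ)) * x 1) := by
  conv_lhs => rw [eq_vec2 x]
  rw [mulV_vec2, cvec, vec2_add_vec2]
  simp only [Amat, Matrix.of_apply, Matrix.cons_val', Matrix.cons_val_zero, Matrix.cons_val_one,
    Matrix.empty_val', Matrix.cons_val_fin_one]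
  congr 1 <;> ring

theorem exists_of_mem_Qset {ξ : R2} (hξ : ξ ∈ Qset α β ε j m ℓ) :
    ∃ s ∈ Ioo (-ε) (1 + ε), ∃ t ∈ Ioo (-1 - ε) (1 + ε),
      ξ = mulV (Rmat (Theta β j ℓ))
        (vec2 ((2:ℝ) ^ ((j:ℝ) - 1) + (2:ℝ) ^ (α * (j:ℝ)) * ((m:ℝ) + s))
          ((2:ℝ) ^ (β * (j:ℝ)) * t)) := by
  obtain ⟨x, ⟨hx₀, hx₁⟩, rfl⟩ := hξ
  exact ⟨x 0, hx₀, x 1, hx₁, congrArg _ (mulV_Amat_add_cvec x)⟩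

theorem natCast_mul_two_rpow_le_of_le_mjmax (hm : (m:ℤ) ≤ mjmax α j) :
    (m:ℝ) * (2:ℝ) ^ (α * (j:ℝ)) ≤ (2:ℝ) ^ ((j:ℝ) - 1) + (2:ℝ) ^ (α * (j:ℝ)) := by
  have hm' : (m:ℝ) - 1 < (2:ℝ) ^ ((1 - α) * (j:ℝ) - 1) := by
    exact_mod_cast Int.le_ceil_iff.1 hm
  have hsplit : (2:ℝ) ^ ((j:ℝ) - 1) = (2:ℝ) ^ ((1 - α) * (j:ℝ) - 1) * (2:ℝ) ^ (α * (j:ℝ)) := by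
    rw [← Real.rpow_add two_pos]
    ring_nf
  rw [hsplit]
  nlinarith [Real.rpow_pos_of_pos two_pos (α * (j:ℝ))]

theorem norm_mem_Icc_of_mem_Qset (hβα : β ≤ α) {ξ : R2} (hξ : ξ ∈ Qset α β ε j m ℓ) :
    (2:ℝ) ^ ((j:ℝ) - 1) + (2:ℝ) ^ (α * (j:ℝ)) * ((m:ℝ) - ε) ≤ ‖ξ‖ ∧
      ‖ξ‖ ≤ (2:ℝ) ^ ((j:ℝ) - 1) + (2:ℝ) ^ (α * (j:ℝ)) * ((m:ℝ) + 2 + 2 * ε) := by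
  obtain ⟨s, ⟨hs₀, hs₁⟩, t, ⟨ht₀, ht₁⟩, rfl⟩ := exists_of_mem_Qset hξ
  have hP := Real.rpow_pos_of_pos two_pos ((j:ℝ) - 1)
  have ha := Real.rpow_pos_of_pos two_pos (α * (j:ℝ))
  have hb := Real.rpow_pos_of_pos two_pos (β * (j:ℝ))
  have hba : (2:ℝ) ^ (β * (j:ℝ)) ≤ (2:ℝ) ^ (α * (j:ℝ)) :=
    Real.rpow_le_rpow_of_exponent_le one_le_two (by gcongr)
  rw [norm_mulV_Rmat_vec2]
  constructor
  · exact (le_norm_vec2 _ _).trans' (by gcongr; linarith)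
  · refine (norm_vec2_le _ _).trans ?_
    have hu₀ : |(2:ℝ) ^ ((j:ℝ) - 1) + (2:ℝ) ^ (α * (j:ℝ)) * ((m:ℝ) + s)| ≤
        (2:ℝ) ^ ((j:ℝ) - 1) + (2:ℝ) ^ (α * (j:ℝ)) * ((m:ℝ) + 1 + ε) :=
      abs_le.2 ⟨by nlinarith, by nlinarith⟩
    have hu₁ : |(2:ℝ) ^ (β * (j:ℝ)) * t| ≤ (2:ℝ) ^ (α * (j:ℝ)) * (1 + ε) := by
      rw [abs_mul, abs_of_pos hb]
      exact mul_le_mul hba (abs_le.2 ⟨by linarith, by linarith⟩) (abs_nonneg t) ha.le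
    linarith

theorem exists_angle_of_mem_Qset
    (hpos : 0 < (2:ℝ) ^ ((j:ℝ) - 1) + (2:ℝ) ^ (α * (j:ℝ)) * ((m:ℝ) - ε))
    {ξ : R2} (hξ : ξ ∈ Qset α β ε j m ℓ) :
    ∃ φ : ℝ, ξ = ‖ξ‖ • vec2 (cos φ) (sin φ) ∧ |φ - Theta β j ℓ| ≤
      (2:ℝ) ^ (β * (j:ℝ)) * (1 + ε) /
        ((2:ℝ) ^ ((j:ℝ) - 1) + (2:ℝ) ^ (α * (j:ℝ)) * ((m:ℝ) - ε)) := by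
  obtain ⟨s, ⟨hs₀, -⟩, t, ⟨ht₀, ht₁⟩, rfl⟩ := exists_of_mem_Qset hξ
  have hb := Real.rpow_pos_of_pos two_pos (β * (j:ℝ))
  have hu₀ : (2:ℝ) ^ ((j:ℝ) - 1) + (2:ℝ) ^ (α * (j:ℝ)) * ((m:ℝ) - ε) ≤
      (2:ℝ) ^ ((j:ℝ) - 1) + (2:ℝ) ^ (α * (j:ℝ)) * ((m:ℝ) + s) := by
    gcongr
    linarith
  have hu₁ : |(2:ℝ) ^ (β * (j:ℝ)) * t| ≤ (2:ℝ) ^ (β * (j:ℝ)) * (1 + ε) := by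
    rw [abs_mul, abs_of_pos hb]
    exact mul_le_mul_of_nonneg_left (abs_le.2 ⟨by linarith, by linarith⟩) hb.le
  obtain ⟨φ, hφ, hφθ⟩ := exists_angle_mulV_Rmat_vec2 (Theta β j ℓ) (hpos.trans_le hu₀)
    ((2:ℝ) ^ (β * (j:ℝ)) * t)
  exact ⟨φ, hφ, hφθ.trans (div_le_div₀ ((abs_nonneg _).trans hu₁) hu₁ hpos hu₀)⟩

end WavePacket

theorem wavePacket_norm_and_angle_general (α β ε : ℝ)
    (hβα : β ≤ α) (hα1 : α ≤ 1) (hε : ε ∈ Set.Ioo (0:ℝ) (1/32))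
    (j m ℓ : ℕ) (hi : memI0 α β (j, m, ℓ)) (ξ : R2) (hξ : ξ ∈ Qset α β ε j m ℓ) :
    ((2:ℝ) ^ ((j:ℝ) - 2) < (2:ℝ) ^ ((j:ℝ) - 1) + (2:ℝ) ^ (α * (j:ℝ)) * ((m:ℝ) - ε) ∧
     (2:ℝ) ^ ((j:ℝ) - 1) + (2:ℝ) ^ (α * (j:ℝ)) * ((m:ℝ) - ε) ≤ ‖ξ‖ ∧
     ‖ξ‖ ≤ (2:ℝ) ^ ((j:ℝ) - 1) + (2:ℝ) ^ (α * (j:ℝ)) * ((m:ℝ) + 2 + 2 * ε) ∧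
     (2:ℝ) ^ ((j:ℝ) - 1) + (2:ℝ) ^ (α * (j:ℝ)) * ((m:ℝ) + 2 + 2 * ε)
        ≤ (2:ℝ) ^ (j:ℝ) + (2:ℝ) ^ (α * (j:ℝ)) * (3 + 2 * ε) ∧
     (2:ℝ) ^ (j:ℝ) + (2:ℝ) ^ (α * (j:ℝ)) * (3 + 2 * ε) < (2:ℝ) ^ ((j:ℝ) + 3)) ∧
    (∃ φ : ℝ, ξ = ‖ξ‖ • vec2 (Real.cos φ) (Real.sin φ) ∧
       |φ - Theta β j ℓ| ≤ 4 * (1 + ε) * (2:ℝ) ^ ((β - 1) * (j:ℝ))) := by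
  obtain ⟨hε₀, hε₁⟩ := hε
  have hma : (m:ℝ) * (2:ℝ) ^ (α * (j:ℝ)) ≤ (2:ℝ) ^ ((j:ℝ) - 1) + (2:ℝ) ^ (α * (j:ℝ)) :=
    natCast_mul_two_rpow_le_of_le_mjmax hi.2.1
  have haQ : (2:ℝ) ^ (α * (j:ℝ)) ≤ (2:ℝ) ^ (j:ℝ) :=
    Real.rpow_le_rpow_of_exponent_le one_le_two (mul_le_of_le_one_left j.cast_nonneg hα1)
  have hQ := Real.rpow_pos_of_pos two_pos (j:ℝ)
  have ha := Real.rpow_pos_of_pos two_pos (α * (j:ℝ))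
  have h₁ : (2:ℝ) ^ ((j:ℝ) - 1) = 2 ^ (j:ℝ) / 2 := by rw [Real.rpow_sub_one two_ne_zero]
  have h₂ : (2:ℝ) ^ ((j:ℝ) - 2) = 2 ^ (j:ℝ) / 4 := by rw [Real.rpow_sub two_pos]; norm_num
  have h₃ : (2:ℝ) ^ ((j:ℝ) + 3) = 2 ^ (j:ℝ) * 8 := by rw [Real.rpow_add two_pos]; norm_num
  have hlow : (2:ℝ) ^ ((j:ℝ) - 2) < (2:ℝ) ^ ((j:ℝ) - 1) + (2:ℝ) ^ (α * (j:ℝ)) * ((m:ℝ) - ε) := by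
    rw [h₁, h₂]; nlinarith
  obtain ⟨hξ_ge, hξ_le⟩ := norm_mem_Icc_of_mem_Qset hβα hξ
  obtain ⟨φ, hφ, hφθ⟩ := exists_angle_of_mem_Qset (hlow.trans_le' (by positivity)) hξ
  refine ⟨⟨hlow, hξ_ge, hξ_le, by rw [h₁] at hma ⊢; linarith, by rw [h₃]; nlinarith⟩,
    φ, hφ, hφθ.trans ?_⟩
  have hb := Real.rpow_pos_of_pos two_pos (β * (j:ℝ))
  rw [h₂] at hlow
  calc (2:ℝ) ^ (β * (j:ℝ)) * (1 + ε) / ((2:ℝ) ^ ((j:ℝ) - 1) + (2:ℝ) ^ (α * (j:ℝ)) * ((m:ℝ) - ε))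
      ≤ (2:ℝ) ^ (β * (j:ℝ)) * (1 + ε) / (2 ^ (j:ℝ) / 4) :=
        div_le_div_of_nonneg_left (by positivity) (by positivity) hlow.le
    _ = 4 * (1 + ε) * (2:ℝ) ^ ((β - 1) * (j:ℝ)) := by
        rw [sub_mul, one_mul, Real.rpow_sub two_pos]
        ring

/-- Norm and angle estimates for elements of `Q_{j,m,ℓ}`:
if `(j,m,ℓ) ∈ I₀` and `ξ ∈ Q_{j,m,ℓ}`, then
`2^{j−2} < 2^{j−1} + 2^{αj}(m − ε) ≤ |ξ| ≤ 2^{j−1} + 2^{αj}(m + 2 + 2ε)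
  ≤ 2^j + 2^{αj}(3 + 2ε) < 2^{j+3}`,
and there is `φ ∈ ℝ` with `ξ = |ξ|·(cos φ, sin φ)` and
`|φ − Θ_{j,ℓ}| ≤ 4(1 + ε)·2^{(β−1)j}`. -/
theorem wavePacket_norm_and_angle (α β ε : ℝ)
    (hβ0 : 0 ≤ β) (hβα : β ≤ α) (hα1 : α ≤ 1) (hε : ε ∈ Set.Ioo (0:ℝ) (1/32))
    (j m ℓ : ℕ) (hi : memI0 α β (j, m, ℓ)) (ξ : R2) (hξ : ξ ∈ Qset α β ε j m ℓ) :
    ((2:ℝ) ^ ((j:ℝ) - 2) < (2:ℝ) ^ ((j:ℝ) - 1) + (2:ℝ) ^ (α * (j:ℝ)) * ((m:ℝ) - ε) ∧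
     (2:ℝ) ^ ((j:ℝ) - 1) + (2:ℝ) ^ (α * (j:ℝ)) * ((m:ℝ) - ε) ≤ ‖ξ‖ ∧
     ‖ξ‖ ≤ (2:ℝ) ^ ((j:ℝ) - 1) + (2:ℝ) ^ (α * (j:ℝ)) * ((m:ℝ) + 2 + 2 * ε) ∧
     (2:ℝ) ^ ((j:ℝ) - 1) + (2:ℝ) ^ (α * (j:ℝ)) * ((m:ℝ) + 2 + 2 * ε)
        ≤ (2:ℝ) ^ (j:ℝ) + (2:ℝ) ^ (α * (j:ℝ)) * (3 + 2 * ε) ∧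
     (2:ℝ) ^ (j:ℝ) + (2:ℝ) ^ (α * (j:ℝ)) * (3 + 2 * ε) < (2:ℝ) ^ ((j:ℝ) + 3)) ∧
    (∃ φ : ℝ, ξ = ‖ξ‖ • vec2 (Real.cos φ) (Real.sin φ) ∧
       |φ - Theta β j ℓ| ≤ 4 * (1 + ε) * (2:ℝ) ^ ((β - 1) * (j:ℝ))) :=
  wavePacket_norm_and_angle_general α β ε hβα hα1 hε j m ℓ hi ξ hξ
end
end

section
/- Let 0 ≤ β ≤ α ≤ 1. For every (j,m,ℓ) ∈ I₀ and every j' ∈ ℕ, the set {ℓ' ∈ ℕ₀ : there exists m' ∈ ℕ₀ such that (j',m',ℓ') ∈ I₀ and Q_{j,m,ℓ} ∩ Q_{j',m',ℓ'} ≠ ∅} has at most 65·N = 650 elements. -/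
noncomputable section

open Real Set MeasureTheory Pointwise
open scoped ENNReal

/-!
Identify `ℝ²` with `ℂ`. A point of `Q_{j,m,ℓ}` is `exp (i Θ_{j,ℓ}) w` with
`Re w ≥ (15/32)·2^j` and `|Im w| ≤ 2·2^{βj}`. If `Q_{j,m,ℓ}` meets `Q_{j',m',ℓ'}`, the two
representatives `w, w'` of a common point differ by the rotation through `Θ_{j',ℓ'} - Θ_{j,ℓ}`,
so the chord `|w - w'| = 2 |sin ((Θ_{j',ℓ'} - Θ_{j,ℓ}) / 2)| |w|` is short: with `M = max j j'`
both points lie in the strip `|Im| ≤ 2·2^{βM}` near the positive real axis while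
`|w| ≥ (15/32)·2^M`, which gives `|sin ((Θ_{j',ℓ'} - Θ_{j,ℓ}) / 2)| ≤ K := (128/15)·2^{(β-1)M}`.
For `K < 1` the angle `Θ_{j',ℓ'}` thus lies within `πK` of `Θ_{j,ℓ} + 2πk` for some
`k ∈ {-1, 0, 1}`, and such a window contains at most `87` of the angles
`Θ_{j',ℓ'} = (π/5)·2^{(β-1)j'}·ℓ'`; this gives `3·87 ≤ 650`. For `K ≥ 1` already
`ℓ' ≤ ℓ_{j'}^max < 87`.
-/

lemma encard_setOf_abs_mul_natCast_sub_le {c a r : ℝ} (B : ℕ) (hc : 0 < c) (h : 2 * r ≤ B * c) :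
    {n : ℕ | |c * n - a| ≤ r}.encard ≤ B + 1 := by
  set n₀ := ⌈(a - r) / c⌉₊
  have hsub : {n : ℕ | |c * n - a| ≤ r} ⊆ Finset.Icc n₀ (n₀ + B) := by
    intro n (hn : |c * n - a| ≤ r)
    obtain ⟨h₁, h₂⟩ := abs_le.1 hn
    have lower : (a - r) / c ≤ n := by rw [div_le_iff₀ hc]; linarith
    have upper : (n : ℝ) ≤ (a - r) / c + B := by
      rw [div_add' _ _ _ hc.ne', le_div_iff₀ hc]; linarith
    simp only [Finset.coe_Icc, mem_Icc]
    refine ⟨Nat.ceil_le.2 lower, ?_⟩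
    exact_mod_cast upper.trans (add_le_add_left (Nat.le_ceil _) _)
  calc _ ≤ _ := encard_mono hsub
    _ = B + 1 := by
      rw [encard_coe_eq_coe_finsetCard, Nat.card_Icc, Nat.add_assoc, Nat.add_sub_cancel_left]
      rfl

lemma Real.exists_abs_sub_int_mul_pi_le_of_abs_sin_le {z s : ℝ} (h : |sin z| ≤ s) :
    ∃ k : ℤ, |z - k * π| ≤ π / 2 * s := by
  refine ⟨round (z / π), ?_⟩
  set d := z - round (z / π) * π
  have hd : |d| ≤ π / 2 := by
    have hround := abs_sub_round (z / π)
    calc |d| = |z / π - round (z / π)| * π := by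
          rw [← abs_of_pos pi_pos, ← abs_mul, abs_of_pos pi_pos, sub_mul,
            div_mul_cancel₀ _ pi_ne_zero]
      _ ≤ 1 / 2 * π := by gcongr
      _ = π / 2 := by ring
  have hsin : |sin d| = |sin z| := by
    rw [sin_sub_int_mul_pi, abs_mul, abs_neg_one_zpow, one_mul]
  have hjordan := mul_abs_le_abs_sin hd
  calc |d| = π / 2 * (2 / π * |d|) := by field_simp
    _ ≤ π / 2 * s := by gcongr; linarith

lemma Complex.abs_re_sub_re_mul_abs_re_add_re_le {w w' : ℂ} (h : ‖w‖ = ‖w'‖) :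
    |w.re - w'.re| * |w.re + w'.re| ≤ (|w.im| + |w'.im|) ^ 2 := by
  have hsq : w.re ^ 2 + w.im ^ 2 = w'.re ^ 2 + w'.im ^ 2 := by
    have := congrArg (· ^ 2) h
    simpa only [Complex.sq_norm, Complex.normSq_apply, ← sq] using this
  calc |w.re - w'.re| * |w.re + w'.re| = |w'.im - w.im| * |w'.im + w.im| := by
        rw [← abs_mul, ← abs_mul]; congr 1; linear_combination hsq
    _ ≤ (|w'.im| + |w.im|) * (|w'.im| + |w.im|) := by
        gcongr
        · exact abs_sub _ _
        · exact abs_add_le _ _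
    _ = (|w.im| + |w'.im|) ^ 2 := by ring

lemma Complex.abs_sin_half_le_of_eq_exp_mul {Δ g b : ℝ} {w w' : ℂ}
    (hw : w' = exp (Δ * I) * w) (hg : 0 < g) (hgw : g ≤ max w.re w'.re)
    (hre : 0 ≤ w.re) (hre' : 0 ≤ w'.re) (him : |w.im| + |w'.im| ≤ b) (hbg : b ≤ g) :
    |Real.sin (Δ / 2)| ≤ b / g := by
  have hnorm : ‖w‖ = ‖w'‖ := by rw [hw, norm_mul, norm_exp_ofReal_mul_I, one_mul]
  have hg_norm : g ≤ ‖w‖ := by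
    rcases le_max_iff.1 hgw with h | h
    · exact h.trans (re_le_norm w)
    · exact hnorm ▸ h.trans (re_le_norm w')
  have hg_sum : g ≤ w.re + w'.re := by rcases le_max_iff.1 hgw with h | h <;> linarith
  have hre_diff : |w'.re - w.re| ≤ b := by
    have key := abs_re_sub_re_mul_abs_re_add_re_le hnorm
    rw [abs_of_nonneg (by linarith : 0 ≤ w.re + w'.re), abs_sub_comm] at key
    have hb : 0 ≤ b := (add_nonneg (abs_nonneg _) (abs_nonneg _)).trans him
    have : (|w.im| + |w'.im|) ^ 2 ≤ b * (w.re + w'.re) :=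
      calc (|w.im| + |w'.im|) ^ 2 ≤ b * b := by rw [sq]; gcongr
        _ ≤ b * (w.re + w'.re) := by gcongr; linarith
    exact le_of_mul_le_mul_right (key.trans this) (by linarith)
  have him_diff : |w'.im - w.im| ≤ b := (abs_sub _ _).trans (by linarith)
  have hchord : ‖w' - w‖ = 2 * |Real.sin (Δ / 2)| * ‖w‖ := by
    rw [hw, ← sub_one_mul, norm_mul, mul_comm (Δ : ℂ), norm_exp_I_mul_ofReal_sub_one, norm_mul,
      Real.norm_eq_abs, Real.norm_eq_abs, abs_two]
  have : 2 * |Real.sin (Δ / 2)| * g ≤ 2 * b := by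
    calc 2 * |Real.sin (Δ / 2)| * g ≤ 2 * |Real.sin (Δ / 2)| * ‖w‖ := by gcongr
      _ = ‖w' - w‖ := hchord.symm
      _ ≤ |(w' - w).re| + |(w' - w).im| := norm_le_abs_re_add_abs_im _
      _ ≤ 2 * b := by rw [sub_re, sub_im]; linarith
  rw [le_div_iff₀ hg]; linarith

lemma natCast_lt_of_le_ljmax {β : ℝ} {j ℓ : ℕ} (h : (ℓ : ℤ) ≤ ljmax β j) :
    (ℓ : ℝ) < 10 * (2 : ℝ) ^ ((1 - β) * j) + 1 :=
  (Int.cast_le.2 h).trans_lt (Int.ceil_lt_add_one _)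

lemma two_rpow_one_sub_mul_mul_two_rpow_sub_one_mul (β x : ℝ) :
    (2 : ℝ) ^ ((1 - β) * x) * (2 : ℝ) ^ ((β - 1) * x) = 1 := by
  rw [← Real.rpow_add two_pos, ← add_mul, sub_add_sub_cancel', sub_self, zero_mul, Real.rpow_zero]

lemma natCast_lt_87_of_le_ljmax {β : ℝ} {j ℓ : ℕ}
    (hK : 1 ≤ 128 / 15 * (2 : ℝ) ^ ((β - 1) * j)) (h : (ℓ : ℤ) ≤ ljmax β j) : ℓ < 87 := by
  have hinv := two_rpow_one_sub_mul_mul_two_rpow_sub_one_mul β j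
  have hscale : (2 : ℝ) ^ ((1 - β) * j) ≤ 128 / 15 := by
    nlinarith [mul_le_mul_of_nonneg_left hK (by positivity : (0 : ℝ) ≤ 2 ^ ((1 - β) * j))]
  have : (ℓ : ℝ) < 87 := by linarith [natCast_lt_of_le_ljmax h]
  exact_mod_cast this

lemma Theta_eq_mul (β : ℝ) (j ℓ : ℕ) : Theta β j ℓ = π / 5 * (2 : ℝ) ^ ((β - 1) * j) * ℓ := by
  unfold Theta; ring

lemma Theta_nonneg (β : ℝ) (j ℓ : ℕ) : 0 ≤ Theta β j ℓ := by
  unfold Theta; positivity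

lemma Theta_lt {β : ℝ} (hβ1 : β ≤ 1) {j ℓ : ℕ} (h : (ℓ : ℤ) ≤ ljmax β j) :
    Theta β j ℓ < 2 * π + π / 5 := by
  have hle_one : (2 : ℝ) ^ ((β - 1) * j) ≤ 1 :=
    Real.rpow_le_one_of_one_le_of_nonpos one_le_two
      (mul_nonpos_of_nonpos_of_nonneg (by linarith) j.cast_nonneg)
  have hinv := two_rpow_one_sub_mul_mul_two_rpow_sub_one_mul β j
  rw [Theta_eq_mul]
  calc π / 5 * (2 : ℝ) ^ ((β - 1) * j) * ℓ
      < π / 5 * (2 : ℝ) ^ ((β - 1) * j) * (10 * (2 : ℝ) ^ ((1 - β) * j) + 1) := by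
        gcongr; exact natCast_lt_of_le_ljmax h
    _ = 2 * π + π / 5 * (2 : ℝ) ^ ((β - 1) * j) := by linear_combination 2 * π * hinv
    _ ≤ 2 * π + π / 5 := by gcongr; exact mul_le_of_le_one_right (by positivity) hle_one

lemma exists_exp_mul_of_mem_Qset {α β ε : ℝ} (hα1 : α ≤ 1) (hε : ε ≤ 1 / 32)
    {j m ℓ : ℕ} {x : R2} (hx : x ∈ Qset α β ε j m ℓ) :
    ∃ w : ℂ, (⟨x 0, x 1⟩ : ℂ) = Complex.exp (Theta β j ℓ * Complex.I) * w ∧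
      15 / 32 * (2 : ℝ) ^ (j : ℝ) ≤ w.re ∧ |w.im| ≤ 2 * (2 : ℝ) ^ (β * j) := by
  obtain ⟨q, ⟨⟨hq₀, -⟩, hq₁, hq₁'⟩, rfl⟩ := hx
  set A := (2 : ℝ) ^ (α * j)
  set P := (2 : ℝ) ^ (j : ℝ)
  have hAP : A ≤ P :=
    Real.rpow_le_rpow_of_exponent_le one_le_two (mul_le_of_le_one_left j.cast_nonneg hα1)
  have hhalf : (2 : ℝ) ^ ((j : ℝ) - 1) = P / 2 := by rw [Real.rpow_sub two_pos, Real.rpow_one]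
  refine ⟨⟨A * q 0 + (2 ^ ((j : ℝ) - 1) + m * A), 2 ^ (β * j) * q 1⟩, ?_, ?_, ?_⟩
  · apply Complex.ext <;>
      simp [Complex.mul_re, Complex.mul_im, Complex.exp_ofReal_mul_I_re,
        Complex.exp_ofReal_mul_I_im, mulV, Rmat, Amat, cvec, vec2, dotProduct,
        Fin.sum_univ_two, EuclideanSpace.equiv] <;> ring
  · have hA : 0 < A := by positivity
    have : -ε * A ≤ A * q 0 := by nlinarith
    have : ε * A ≤ P / 32 := by nlinarith
    have : 0 ≤ (m : ℝ) * A := by positivity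
    dsimp only
    rw [hhalf]
    linarith
  · have hq : |q 1| ≤ 2 := abs_le.2 ⟨by linarith, by linarith⟩
    dsimp only
    rw [abs_mul, abs_of_pos (by positivity), mul_comm]
    gcongr

lemma abs_sin_half_Theta_sub_le {α β ε : ℝ} (hβ0 : 0 ≤ β) (hα1 : α ≤ 1) (hε : ε ≤ 1 / 32)
    {j m ℓ j' m' ℓ' : ℕ} {x : R2} (hx : x ∈ Qset α β ε j m ℓ) (hx' : x ∈ Qset α β ε j' m' ℓ')
    (hK : 128 / 15 * (2 : ℝ) ^ ((β - 1) * max j j') ≤ 1) :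
    |sin ((Theta β j' ℓ' - Theta β j ℓ) / 2)| ≤ 128 / 15 * (2 : ℝ) ^ ((β - 1) * max j j') := by
  obtain ⟨w, hxw, hw_re, hw_im⟩ := exists_exp_mul_of_mem_Qset hα1 hε hx
  obtain ⟨w', hxw', hw'_re, hw'_im⟩ := exists_exp_mul_of_mem_Qset hα1 hε hx'
  have hrot : w = Complex.exp ((Theta β j' ℓ' - Theta β j ℓ : ℝ) * Complex.I) * w' := by
    apply mul_left_cancel₀ (Complex.exp_ne_zero (Theta β j ℓ * Complex.I))
    rw [← hxw, hxw', ← mul_assoc, ← Complex.exp_add]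
    push_cast
    ring_nf
  set M := max j j'
  have two_rpow_le {e : ℝ} (he : 0 ≤ e) {i : ℕ} (hi : i ≤ M) : (2 : ℝ) ^ (e * i) ≤ 2 ^ (e * M) :=
    Real.rpow_le_rpow_of_exponent_le one_le_two (by gcongr)
  set g := 15 / 32 * (2 : ℝ) ^ (M : ℝ)
  have hg : g ≤ max w'.re w.re := by
    rcases le_total j j' with h | h
    · have hgj : g = 15 / 32 * (2 : ℝ) ^ (j' : ℝ) := by simp only [g, M, max_eq_right h]
      exact hgj.le.trans (hw'_re.trans (le_max_left _ _))
    · have hgj : g = 15 / 32 * (2 : ℝ) ^ (j : ℝ) := by simp only [g, M, max_eq_left h]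
      exact hgj.le.trans (hw_re.trans (le_max_right _ _))
  have hb : |w'.im| + |w.im| ≤ 4 * (2 : ℝ) ^ (β * M) := by
    linarith [two_rpow_le hβ0 (le_max_left j j'), two_rpow_le hβ0 (le_max_right j j')]
  have hKg : 128 / 15 * (2 : ℝ) ^ ((β - 1) * M) * g = 4 * (2 : ℝ) ^ (β * M) := by
    rw [show β * (M : ℝ) = (β - 1) * M + M by ring, Real.rpow_add two_pos]
    ring
  have hg_pos : 0 < g := by positivity
  calc |sin ((Theta β j' ℓ' - Theta β j ℓ) / 2)| ≤ 4 * (2 : ℝ) ^ (β * M) / g :=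
        Complex.abs_sin_half_le_of_eq_exp_mul hrot hg_pos hg
          ((by positivity : (0 : ℝ) ≤ _).trans hw'_re) ((by positivity : (0 : ℝ) ≤ _).trans hw_re)
          hb (by rw [← hKg]; exact mul_le_of_le_one_left hg_pos.le hK)
    _ = 128 / 15 * (2 : ℝ) ^ ((β - 1) * M) := by rw [← hKg, mul_div_cancel_right₀ _ hg_pos.ne']

lemma exists_int_abs_Theta_sub_le {α β ε : ℝ} (hβ0 : 0 ≤ β) (hβ1 : β ≤ 1) (hα1 : α ≤ 1)
    (hε : ε ≤ 1 / 32) {j m ℓ j' m' ℓ' : ℕ} (hℓ : (ℓ : ℤ) ≤ ljmax β j)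
    (hℓ' : (ℓ' : ℤ) ≤ ljmax β j') (hx : (Qset α β ε j m ℓ ∩ Qset α β ε j' m' ℓ').Nonempty)
    (hK : 128 / 15 * (2 : ℝ) ^ ((β - 1) * max j j') < 1) :
    ∃ k ∈ Finset.Icc (-1 : ℤ) 1, |Theta β j' ℓ' - (Theta β j ℓ + 2 * π * k)| ≤
      π * (128 / 15 * (2 : ℝ) ^ ((β - 1) * max j j')) := by
  obtain ⟨x, hx, hx'⟩ := hx
  obtain ⟨k, hk⟩ := Real.exists_abs_sub_int_mul_pi_le_of_abs_sin_le
    (abs_sin_half_Theta_sub_le hβ0 hα1 hε hx hx' hK.le)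
  have hwindow : |Theta β j' ℓ' - (Theta β j ℓ + 2 * π * k)| ≤
      π * (128 / 15 * (2 : ℝ) ^ ((β - 1) * max j j')) :=
    calc |Theta β j' ℓ' - (Theta β j ℓ + 2 * π * k)|
        = 2 * |(Theta β j' ℓ' - Theta β j ℓ) / 2 - k * π| := by
          rw [← abs_two, ← abs_mul]; ring_nf
      _ ≤ _ := by linarith
  refine ⟨k, ?_, hwindow⟩
  -- `|k| ≤ 1`: both angles lie in `[0, 2π + π/5)` and the window is narrower than `π`
  have hθ₀ := Theta_nonneg β j ℓ
  have hθ₀' := Theta_nonneg β j' ℓ'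
  have hθ := Theta_lt hβ1 hℓ
  have hθ' := Theta_lt hβ1 hℓ'
  obtain ⟨hlo, hhi⟩ := abs_le.1 hwindow
  have hk_lt : k < 2 := by
    by_contra! h
    have : (2 : ℝ) ≤ k := by exact_mod_cast h
    nlinarith [pi_pos]
  have hk_gt : -2 < k := by
    by_contra! h
    have : (k : ℝ) ≤ -2 := by exact_mod_cast h
    nlinarith [pi_pos]
  simp only [Finset.mem_Icc]
  omega

lemma encard_setOf_abs_Theta_sub_le {β K : ℝ} (j : ℕ) (a : ℝ)
    (hK : K ≤ 128 / 15 * (2 : ℝ) ^ ((β - 1) * j)) :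
    {n : ℕ | |Theta β j n - a| ≤ π * K}.encard ≤ 87 := by
  simp only [Theta_eq_mul]
  refine (encard_setOf_abs_mul_natCast_sub_le 86 (by positivity) ?_).trans (by norm_num)
  have := mul_le_mul_of_nonneg_left hK pi_pos.le
  have : 0 ≤ π * (2 : ℝ) ^ ((β - 1) * j) := by positivity
  push_cast
  linarith

theorem wavePacket_angle_count_general (α β ε : ℝ)
    (hβ0 : 0 ≤ β) (hβα : β ≤ α) (hα1 : α ≤ 1) (hε : ε ∈ Set.Ioo (0:ℝ) (1/32))
    (j m ℓ : ℕ) (hi : memI0 α β (j, m, ℓ)) (j' : ℕ) :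
    {ℓ' : ℕ | ∃ m' : ℕ, memI0 α β (j', m', ℓ') ∧
        (Qset α β ε j m ℓ ∩ Qset α β ε j' m' ℓ').Nonempty}.encard ≤ 650 := by
  have hβ1 : β ≤ 1 := hβα.trans hα1
  set K := 128 / 15 * (2 : ℝ) ^ ((β - 1) * max j j')
  have hKj' : K ≤ 128 / 15 * (2 : ℝ) ^ ((β - 1) * j') := by
    gcongr 128 / 15 * ?_
    exact Real.rpow_le_rpow_of_exponent_le one_le_two
      (mul_le_mul_of_nonpos_left (by exact_mod_cast le_max_right j j') (by linarith))
  rcases le_or_gt 1 K with hK | hK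
  · calc _ ≤ ((Finset.range 87 : Finset ℕ) : Set ℕ).encard := encard_mono <| by
          rintro n ⟨_, ⟨-, -, hn⟩, -⟩
          simpa using natCast_lt_87_of_le_ljmax (hK.trans hKj') hn
      _ ≤ 650 := by rw [encard_coe_eq_coe_finsetCard, Finset.card_range]; norm_num
  · let window (k : ℤ) := {n : ℕ | |Theta β j' n - (Theta β j ℓ + 2 * π * k)| ≤ π * K}
    calc _ ≤ (⋃ k ∈ Finset.Icc (-1 : ℤ) 1, window k).encard := encard_mono <| by
          rintro n ⟨_, ⟨-, -, hn⟩, hx⟩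
          obtain ⟨k, hk, hwindow⟩ :=
            exists_int_abs_Theta_sub_le hβ0 hβ1 hα1 hε.2.le hi.2.2 hn hx hK
          exact mem_biUnion hk hwindow
      _ ≤ ∑ k ∈ Finset.Icc (-1 : ℤ) 1, (window k).encard := Finset.set_encard_biUnion_le _ _
      _ ≤ ∑ _k ∈ Finset.Icc (-1 : ℤ) 1, 87 :=
          Finset.sum_le_sum fun k _ ↦ encard_setOf_abs_Theta_sub_le j' _ hKj'
      _ ≤ 650 := by decide

/-- For every `(j,m,ℓ) ∈ I₀` and every `j' ∈ ℕ = {1,2,…}`, there are at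
most `65·N = 650` values of `ℓ' ∈ ℕ₀` for which there is some `m' ∈ ℕ₀` with
`(j',m',ℓ') ∈ I₀` and `Q_{j,m,ℓ} ∩ Q_{j',m',ℓ'} ≠ ∅`. -/
theorem wavePacket_angle_count (α β ε : ℝ)
    (hβ0 : 0 ≤ β) (hβα : β ≤ α) (hα1 : α ≤ 1) (hε : ε ∈ Set.Ioo (0:ℝ) (1/32))
    (j m ℓ : ℕ) (hi : memI0 α β (j, m, ℓ)) (j' : ℕ) (hj' : 1 ≤ j') :
    {ℓ' : ℕ | ∃ m' : ℕ, memI0 α β (j', m', ℓ') ∧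
        (Qset α β ε j m ℓ ∩ Qset α β ε j' m' ℓ').Nonempty}.encard ≤ 650 :=
  wavePacket_angle_count_general α β ε hβ0 hβα hα1 hε j m ℓ hi j'
end
end

section
/- Let 0 ≤ β ≤ α ≤ 1. The set {(j',m',ℓ') ∈ I₀ : Q₀ ∩ Q_{j',m',ℓ'} ≠ ∅} has at most 135·N = 1350 elements. -/
noncomputable section

open Real Set MeasureTheory Pointwise
open scoped ENNReal

/-!
A point of `Q_{j,m,ℓ}` is a rotation of a point of `A_j Q + c_{j,m}`, whose first coordinate
exceeds `2^{j-1} - ε 2^{αj} ≥ 2^j (1/2 - ε)`. Since rotations preserve norms, `Q_{j,m,ℓ}` can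
meet `B₄(0)` only when `j ≤ 3`, and then `m ≤ m_j^max ≤ 2^{j-1} ≤ 4` and
`ℓ ≤ ℓ_j^max ≤ 10·2^j ≤ 80`: at most `3·5·81 = 1215` triples remain.
-/

lemma norm_mulV_Rmat (θ : ℝ) (v : R2) : ‖mulV (Rmat θ) v‖ = ‖v‖ := by
  have h0 : mulV (Rmat θ) v 0 = cos θ * v 0 - sin θ * v 1 := by
    simp [mulV, Rmat, dotProduct, Fin.sum_univ_two]; ring
  have h1 : mulV (Rmat θ) v 1 = sin θ * v 0 + cos θ * v 1 := by
    simp [mulV, Rmat, dotProduct, Fin.sum_univ_two]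
  simp only [EuclideanSpace.norm_eq, Fin.sum_univ_two, h0, h1, Real.norm_eq_abs, sq_abs]
  congr 1
  linear_combination (v 0 ^ 2 + v 1 ^ 2) * sin_sq_add_cos_sq θ

lemma mulV_Amat_add_cvec_apply_zero (α β : ℝ) (j m : ℕ) (q : R2) :
    (mulV (Amat α β j) q + cvec α j m) 0
      = (2:ℝ) ^ (α * j) * q 0 + ((2:ℝ) ^ ((j:ℝ) - 1) + m * (2:ℝ) ^ (α * j)) := by
  simp [mulV, Amat, cvec, vec2, dotProduct, Fin.sum_univ_two]

lemma pow_mul_lt_norm_of_mem_Qset {α β ε : ℝ} {j m ℓ : ℕ} (hα : α ≤ 1) (hε : 0 ≤ ε)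
    {x : R2} (hx : x ∈ Qset α β ε j m ℓ) : (2:ℝ) ^ j * (1/2 - ε) < ‖x‖ := by
  obtain ⟨q, hq, rfl⟩ := hx
  rw [norm_mulV_Rmat]
  have hαj : (2:ℝ) ^ (α * j) ≤ 2 ^ j := by
    rw [← Real.rpow_natCast]
    exact Real.rpow_le_rpow_of_exponent_le one_le_two (by nlinarith [(j.cast_nonneg : (0:ℝ) ≤ j)])
  have hhalf : (2:ℝ) ^ ((j:ℝ) - 1) = 2 ^ j / 2 := by
    rw [Real.rpow_sub two_pos, Real.rpow_natCast, Real.rpow_one]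
  have hpos : (0:ℝ) < 2 ^ (α * j) := Real.rpow_pos_of_pos two_pos _
  calc (2:ℝ) ^ j * (1/2 - ε) ≤ 2 ^ j / 2 - ε * 2 ^ (α * j) := by nlinarith
    _ < (mulV (Amat α β j) q + cvec α j m) 0 := by
      rw [mulV_Amat_add_cvec_apply_zero, hhalf]
      nlinarith [hq.1.1, (m.cast_nonneg : (0:ℝ) ≤ m)]
    _ ≤ ‖mulV (Amat α β j) q + cvec α j m‖ := (le_abs_self _).trans
      (PiLp.norm_apply_le (mulV (Amat α β j) q + cvec α j m) 0)

lemma le_three_of_pow_mul_lt_four {ε : ℝ} {j : ℕ} (hε : ε < 1/4)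
    (h : (2:ℝ) ^ j * (1/2 - ε) < 4) : j ≤ 3 := by
  by_contra! hj
  have : (2:ℝ) ^ 4 ≤ 2 ^ j := pow_le_pow_right₀ one_le_two hj
  nlinarith

lemma mjmax_le_two_pow {α : ℝ} (hα : 0 ≤ α) {j : ℕ} (hj : 1 ≤ j) : mjmax α j ≤ 2 ^ (j - 1) := by
  refine Int.ceil_le.mpr ?_
  rw [Int.cast_pow, Int.cast_ofNat, ← Real.rpow_natCast, Nat.cast_sub hj, Nat.cast_one]
  exact Real.rpow_le_rpow_of_exponent_le one_le_two (by nlinarith [(j.cast_nonneg : (0:ℝ) ≤ j)])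

lemma ljmax_le_ten_mul_two_pow {β : ℝ} (hβ : 0 ≤ β) (j : ℕ) : ljmax β j ≤ 10 * 2 ^ j := by
  refine Int.ceil_le.mpr ?_
  push_cast
  rw [← Real.rpow_natCast]
  gcongr
  · exact one_le_two
  · nlinarith [(j.cast_nonneg : (0:ℝ) ≤ j)]

/-- There are at most `135·N = 1350` triples `(j',m',ℓ') ∈ I₀` such that
`Q₀ ∩ Q_{j',m',ℓ'} ≠ ∅`, where `Q₀ = B₄(0)`. -/
theorem wavePacket_lowpass_count (α β ε : ℝ)
    (hβ0 : 0 ≤ β) (hβα : β ≤ α) (hα1 : α ≤ 1) (hε : ε ∈ Set.Ioo (0:ℝ) (1/32)) :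
    {i : ℕ × ℕ × ℕ | memI0 α β i ∧
        (Metric.ball (0:R2) 4 ∩ Qset α β ε i.1 i.2.1 i.2.2).Nonempty}.encard ≤ 1350 := by
  have hsub : {i : ℕ × ℕ × ℕ | memI0 α β i ∧
      (Metric.ball (0:R2) 4 ∩ Qset α β ε i.1 i.2.1 i.2.2).Nonempty}
        ⊆ ↑(Finset.Icc 1 3 ×ˢ Finset.range 5 ×ˢ Finset.range 81) := by
    rintro ⟨j, m, ℓ⟩ ⟨⟨hj1, hm, hℓ⟩, x, hx, hxQ⟩
    dsimp only at hj1 hm hℓ hxQ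
    have hj3 : j ≤ 3 := le_three_of_pow_mul_lt_four (by linarith [hε.2])
      ((pow_mul_lt_norm_of_mem_Qset hα1 hε.1.le hxQ).trans (mem_ball_zero_iff.mp hx))
    have hm4 := hm.trans ((mjmax_le_two_pow (hβ0.trans hβα) hj1).trans
      (pow_le_pow_right₀ one_le_two (Nat.sub_le_sub_right hj3 1)))
    have hℓ80 := hℓ.trans ((ljmax_le_ten_mul_two_pow hβ0 j).trans
      (mul_le_mul_of_nonneg_left (pow_le_pow_right₀ one_le_two hj3) (by norm_num)))
    simp only [Finset.coe_product, Set.mem_prod, Finset.mem_coe, Finset.mem_Icc, Finset.mem_range]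
    omega
  calc _ ≤ _ := Set.encard_le_encard hsub
    _ ≤ 1350 := by
      rw [Set.encard_coe_eq_coe_finsetCard]
      simp only [Finset.card_product, Nat.card_Icc, Finset.card_range]
      norm_num
end
end
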